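/- arXiv:2110.09089 — 3 statements merged into one kernel-verified Lean document; each statement's English description precedes it below -/
import Mathlib

section
/- Fix a, b ∈ ℤ/4ℤ, R = R_{a+bw}, n ≥ 1, a positive integer k, vectors x₁, …, x_k ∈ Rⁿ and scalars a₁, …, a_k ∈ R. Then Φ⁻¹((Φ(Σ_{i=1}^{k} aᵢxᵢ))^R) = Σ_{i=1}^{k} aᵢ · Φ⁻¹((Φ(xᵢ))^R); equivalently, Φ⁻¹((Φ(x))^R) = 3·x^r for every x ∈ Rⁿ and the map x ↦ 3·x^r on Rⁿ is R-linear. -/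
open Polynomial

/-- The base ring ℤ/4ℤ. -/
abbrev Z4 := ZMod 4

/-- The polynomial X² − (a + bX) over ℤ/4ℤ. -/
noncomputable def wPoly (a b : Z4) : Z4[X] := X ^ 2 - (C b * X + C a)

/-- The ring R_{a+bw} = (ℤ/4ℤ)[X]/(X² − (a + bX)); every element is uniquely
x₀ + x₁·w with x₀, x₁ ∈ ℤ/4ℤ, and w² = a + b·w. -/
abbrev Rw (a b : Z4) : Type := AdjoinRoot (wPoly a b)

/-- The element w of R_{a+bw}. -/
noncomputable def ww (a b : Z4) : Rw a b := AdjoinRoot.root _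

instance (a b : Z4) : Nonempty (Rw a b) := ⟨0⟩

/-- The Gau map expressed on coordinates:  ψ(x₀, x₁) is the DNA pair (in Fin 4 × Fin 4,
with A,G,C,T encoded as 0,1,2,3) assigned to the ring element x₀ + x₁·w. -/
def psi (p : Z4 × Z4) : Fin 4 × Fin 4 :=
  match p.1.val, p.2.val with
  | 0, 0 => (3, 3)
  | 1, 0 => (0, 1)
  | 2, 0 => (2, 2)
  | 3, 0 => (1, 0)
  | 0, 1 => (0, 2)
  | 1, 1 => (0, 3)
  | 2, 1 => (1, 3)
  | 3, 1 => (1, 2)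
  | 0, 2 => (1, 1)
  | 1, 2 => (2, 3)
  | 2, 2 => (0, 0)
  | 3, 2 => (3, 2)
  | 0, 3 => (2, 0)
  | 1, 3 => (2, 1)
  | 2, 3 => (3, 1)
  | _, _ => (3, 0)

/-- `phi` is a Gau map on R_{a+bw}: on the element x₀ + x₁·w it takes the value
prescribed by the table ψ. -/
def IsGauMap (a b : Z4) (phi : Rw a b → Fin 4 × Fin 4) : Prop :=
  ∀ x₀ x₁ : Z4,
    phi (algebraMap Z4 (Rw a b) x₀ + algebraMap Z4 (Rw a b) x₁ * ww a b) = psi (x₀, x₁)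

/-- Coordinatewise extension Φ of a Gau map φ to vectors. -/
def PhiV (a b : Z4) (phi : Rw a b → Fin 4 × Fin 4) (n : ℕ) (x : Fin n → Rw a b) :
    Fin n → Fin 4 × Fin 4 :=
  fun j => phi (x j)

/-- Inverse Φ⁻¹ of the coordinatewise extension of a Gau map. -/
noncomputable def PhiVinv (a b : Z4) (phi : Rw a b → Fin 4 × Fin 4) (n : ℕ)
    (y : Fin n → Fin 4 × Fin 4) : Fin n → Rw a b :=
  fun j => Function.invFun phi (y j)

/-- DNA-string reversal y ↦ y^R on Σⁿ: read the length-2n DNA string backwards,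
i.e. reverse the order of the pairs and swap the two entries of each pair. -/
def dnaRev (n : ℕ) (y : Fin n → Fin 4 × Fin 4) : Fin n → Fin 4 × Fin 4 :=
  fun j => ((y j.rev).2, (y j.rev).1)

/-- Watson–Crick complement y ↦ y^C on Σⁿ. -/
def dnaCompl (n : ℕ) (y : Fin n → Fin 4 × Fin 4) : Fin n → Fin 4 × Fin 4 :=
  fun j => (3 - (y j).1, 3 - (y j).2)

/-- Vector reversal g ↦ g^r on Rⁿ. -/
def vecRev {α : Type*} (n : ℕ) (x : Fin n → α) : Fin n → α :=
  fun j => x j.rev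

/-!
Reading a DNA string backwards reverses the order of the pairs and swaps the two letters of
each pair. Inspecting the table of the Gau map, swapping the letters of φ(z) gives φ(3z) for
every z ∈ R_{a+bw}, so Φ⁻¹((Φ(x))^R) = 3·x^r, which is R-linear in x as a scalar multiple of a
coordinate permutation.
-/

theorem AdjoinRoot.exists_eq_algebraMap_add_algebraMap_mul_root {R : Type*} [CommRing R]
    {g : R[X]} (hg : g.Monic) (hdeg : g.natDegree = 2) (z : AdjoinRoot g) :
    ∃ r₀ r₁ : R, z = algebraMap R _ r₀ + algebraMap R _ r₁ * root g := by
  obtain ⟨p, rfl⟩ := mk_surjective z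
  have hmod : mk g (p %ₘ g) = mk g p := by
    rw [← modByMonicHom_mk hg]
    exact mk_leftInverse hg _
  have hlin : (p %ₘ g).natDegree ≤ 1 := by
    have := natDegree_modByMonic_lt p hg (by rintro rfl; simp at hdeg)
    omega
  refine ⟨(p %ₘ g).coeff 0, (p %ₘ g).coeff 1, ?_⟩
  conv_lhs => rw [← hmod, eq_X_add_C_of_natDegree_le_one hlin]
  rw [algebraMap_eq, map_add, map_mul, mk_C, mk_C, mk_X, add_comm]

theorem wPoly_monic (a b : Z4) : (wPoly a b).Monic :=
  monic_X_pow_sub (degree_linear_le.trans_lt (by exact_mod_cast one_lt_two))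

theorem natDegree_wPoly (a b : Z4) : (wPoly a b).natDegree = 2 := by
  have : Fact (1 < 4) := ⟨by norm_num⟩
  rw [wPoly, natDegree_sub_eq_left_of_natDegree_lt] <;> rw [natDegree_X_pow]
  exact natDegree_linear_le.trans_lt one_lt_two

theorem psi_swap (p : Z4 × Z4) : (psi p).swap = psi (3 * p.1, 3 * p.2) := by
  revert p; decide

theorem psi_injective : Function.Injective psi := by
  decide

namespace IsGauMap

variable {a b : Z4} {phi : Rw a b → Fin 4 × Fin 4}

theorem exists_eq_psi (hphi : IsGauMap a b phi) (z : Rw a b) :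
    ∃ p : Z4 × Z4, z = algebraMap Z4 _ p.1 + algebraMap Z4 _ p.2 * ww a b ∧ phi z = psi p := by
  obtain ⟨r₀, r₁, rfl⟩ :=
    AdjoinRoot.exists_eq_algebraMap_add_algebraMap_mul_root (wPoly_monic a b)
      (natDegree_wPoly a b) z
  exact ⟨(r₀, r₁), rfl, hphi r₀ r₁⟩

theorem injective (hphi : IsGauMap a b phi) : Function.Injective phi := by
  intro z₁ z₂ h
  obtain ⟨p, rfl, hp⟩ := hphi.exists_eq_psi z₁
  obtain ⟨q, rfl, hq⟩ := hphi.exists_eq_psi z₂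
  obtain rfl : p = q := psi_injective (hp.symm.trans (h.trans hq))
  rfl

theorem invFun_swap (hphi : IsGauMap a b phi) (z : Rw a b) :
    Function.invFun phi (phi z).swap = 3 * z := by
  obtain ⟨p, rfl, hp⟩ := hphi.exists_eq_psi z
  have h3 : phi (3 * (algebraMap Z4 _ p.1 + algebraMap Z4 _ p.2 * ww a b)) =
      psi (3 * p.1, 3 * p.2) := by
    rw [← hphi]
    simp only [map_mul, map_ofNat]
    ring_nf
  rw [hp, psi_swap, ← h3, Function.leftInverse_invFun hphi.injective]

theorem phiVinv_dnaRev (hphi : IsGauMap a b phi) (n : ℕ) (z : Fin n → Rw a b) :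
    PhiVinv a b phi n (dnaRev n (PhiV a b phi n z)) = (3 : Rw a b) • vecRev n z :=
  funext fun j => hphi.invFun_swap (z j.rev)

end IsGauMap

theorem vecRev_eq_funLeft (R : Type*) {M : Type*} [Semiring R] [AddCommMonoid M] [Module R M]
    {n : ℕ} (z : Fin n → M) : vecRev n z = LinearMap.funLeft R M Fin.rev z :=
  rfl

theorem gauMap_rev_linear_general (a b : Z4) (n k : ℕ)
    (phi : Rw a b → Fin 4 × Fin 4) (hphi : IsGauMap a b phi)
    (x : Fin k → Fin n → Rw a b) (c : Fin k → Rw a b) :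
    PhiVinv a b phi n (dnaRev n (PhiV a b phi n (∑ i, c i • x i))) =
      ∑ i, c i • PhiVinv a b phi n (dnaRev n (PhiV a b phi n (x i))) ∧
    (∀ z : Fin n → Rw a b,
      PhiVinv a b phi n (dnaRev n (PhiV a b phi n z)) = (3 : Rw a b) • vecRev n z) ∧
    IsLinearMap (Rw a b) (fun z : Fin n → Rw a b => (3 : Rw a b) • vecRev n z) := by
  have hrev := hphi.phiVinv_dnaRev n
  refine ⟨?_, hrev, ?_⟩
  · simp only [hrev, vecRev_eq_funLeft (Rw a b), map_sum, map_smul, Finset.smul_sum,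
      smul_comm (3 : Rw a b)]
  · exact ((3 : Rw a b) • LinearMap.funLeft (Rw a b) (Rw a b) (Fin.rev (n := n))).isLinear

/-- Φ⁻¹((Φ(Σᵢ aᵢxᵢ))^R) = Σᵢ aᵢ·Φ⁻¹((Φ(xᵢ))^R); equivalently,
Φ⁻¹((Φ(x))^R) = 3·x^r for every x ∈ Rⁿ, and the map x ↦ 3·x^r on Rⁿ is R-linear. -/
theorem gauMap_rev_linear (a b : Z4) (n k : ℕ) (hn : 1 ≤ n) (hk : 1 ≤ k)
    (phi : Rw a b → Fin 4 × Fin 4) (hphi : IsGauMap a b phi)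
    (x : Fin k → Fin n → Rw a b) (c : Fin k → Rw a b) :
    PhiVinv a b phi n (dnaRev n (PhiV a b phi n (∑ i, c i • x i))) =
      ∑ i, c i • PhiVinv a b phi n (dnaRev n (PhiV a b phi n (x i))) ∧
    (∀ z : Fin n → Rw a b,
      PhiVinv a b phi n (dnaRev n (PhiV a b phi n z)) = (3 : Rw a b) • vecRev n z) ∧
    IsLinearMap (Rw a b) (fun z : Fin n → Rw a b => (3 : Rw a b) • vecRev n z) :=
  gauMap_rev_linear_general a b n k phi hphi x c
end

section
/- Let a, b ∈ {1, 3} ⊆ ℤ/4ℤ and R = R_{a+bw}, and let n ≥ 1. For every vector c = (c₁, …, c_n) ∈ Rⁿ with Σ_{i=1}^{n} cᵢ² = 0, one has 2·Σ_{i=1}^{n} cᵢ = 0 in R; i.e., the all-2 vector (2, 2, …, 2) is orthogonal (with respect to the Euclidean form Σᵢ xᵢyᵢ) to every self-orthogonal vector of Rⁿ. -/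
open Polynomial

/-! Over ℤ/4ℤ both `x ↦ 2x²` and `x ↦ 2x⁴` are additive, so the elements with `2x⁴ = 2x` form a
subalgebra. When `a` and `b` are odd it contains `w` and hence is all of `R` (this is `x⁴ = x` in
`R/2R ≅ 𝔽₄`). For `s = ∑ cᵢ` this gives `2s = 2s⁴ = s² · 2s² = s² · 2∑ cᵢ² = 0`. -/

section CharFour

variable {R : Type*} [CommRing R] [Algebra Z4 R]

theorem four_eq_zero_of_algebra_zmod_four : (4 : R) = 0 := by
  rw [← map_ofNat (algebraMap Z4 R) 4]
  exact (algebraMap Z4 R).map_zero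

theorem two_mul_add_sq (x y : R) : 2 * (x + y) ^ 2 = 2 * x ^ 2 + 2 * y ^ 2 := by
  linear_combination (x * y) * (four_eq_zero_of_algebra_zmod_four : (4 : R) = 0)

theorem two_mul_sum_sq {ι : Type*} (s : Finset ι) (c : ι → R) :
    2 * (∑ i ∈ s, c i) ^ 2 = ∑ i ∈ s, 2 * c i ^ 2 :=
  map_sum (AddMonoidHom.mk' (fun x : R => 2 * x ^ 2) two_mul_add_sq) c s

theorem two_mul_pow_four_eq_of_mem_adjoin {w x : R} (hw : 2 * w ^ 4 = 2 * w)
    (hx : x ∈ Algebra.adjoin Z4 {w}) : 2 * x ^ 4 = 2 * x := by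
  have h4 : (4 : R) = 0 := four_eq_zero_of_algebra_zmod_four
  induction hx using Algebra.adjoin_induction with
  | mem x hx => rwa [Set.mem_singleton_iff.mp hx]
  | algebraMap r =>
    have hr : 2 * r ^ 4 = 2 * r := by revert r; decide
    simpa only [map_mul, map_pow, map_ofNat] using congrArg (algebraMap Z4 R) hr
  | add x y _ _ hx hy =>
    linear_combination hx + hy + (2 * x ^ 3 * y + 3 * x ^ 2 * y ^ 2 + 2 * x * y ^ 3) * h4
  | mul x y _ _ hx hy =>
    linear_combination y ^ 4 * hx + x * hy

theorem two_mul_pow_four_of_sq_eq {α β w : R} (hα : 2 * α = 2) (hβ : 2 * β = 2)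
    (hw : w ^ 2 = α + β * w) : 2 * w ^ 4 = 2 * w := by
  linear_combination (2 * (w ^ 2 + α + β * w) + 2 * β ^ 2) * hw + (α + 1 + β ^ 2) * hα +
    (β + 1 + (β ^ 2 + β + 1) * w) * hβ +
    (1 + α * β * w) * (four_eq_zero_of_algebra_zmod_four : (4 : R) = 0)

end CharFour

theorem aeval_wPoly {A : Type*} [CommRing A] [Algebra Z4 A] (a b : Z4) (x : A) :
    aeval x (wPoly a b) = x ^ 2 - (algebraMap Z4 A b * x + algebraMap Z4 A a) := by
  simp [wPoly]

theorem ww_sq (a b : Z4) :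
    ww a b ^ 2 = algebraMap Z4 (Rw a b) a + algebraMap Z4 (Rw a b) b * ww a b := by
  have h : aeval (ww a b) (wPoly a b) = 0 := (AdjoinRoot.aeval_eq _).trans AdjoinRoot.mk_self
  rw [aeval_wPoly] at h
  linear_combination h

theorem all_two_orthogonal_to_self_orthogonal_general (a b : Z4) (ha : a = 1 ∨ a = 3)
    (hb : b = 1 ∨ b = 3) (n : ℕ) (c : Fin n → Rw a b)
    (hc : ∑ i, c i ^ 2 = 0) :
    2 * ∑ i, c i = 0 := by
  have two_mul_of_odd {u : Z4} (hu : u = 1 ∨ u = 3) : 2 * algebraMap Z4 (Rw a b) u = 2 := by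
    have h : 2 * u = 2 := by rcases hu with rfl | rfl <;> decide
    simpa only [map_mul, map_ofNat] using congrArg (algebraMap Z4 (Rw a b)) h
  have hw : 2 * ww a b ^ 4 = 2 * ww a b :=
    two_mul_pow_four_of_sq_eq (two_mul_of_odd ha) (two_mul_of_odd hb) (ww_sq a b)
  have hfix (x : Rw a b) : 2 * x ^ 4 = 2 * x :=
    two_mul_pow_four_eq_of_mem_adjoin hw (by rw [ww, AdjoinRoot.adjoinRoot_eq_top]; trivial)
  calc 2 * ∑ i, c i = (∑ i, c i) ^ 2 * (2 * (∑ i, c i) ^ 2) := by rw [← hfix]; ring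
    _ = 0 := by rw [two_mul_sum_sq, ← Finset.mul_sum, hc, mul_zero, mul_zero]

/-- for a, b ∈ {1,3} ⊆ ℤ/4ℤ, every self-orthogonal vector c ∈ Rⁿ
(i.e. Σᵢ cᵢ² = 0) satisfies 2·Σᵢ cᵢ = 0, i.e. the all-2 vector is orthogonal to it. -/
theorem all_two_orthogonal_to_self_orthogonal (a b : Z4) (ha : a = 1 ∨ a = 3)
    (hb : b = 1 ∨ b = 3) (n : ℕ) (hn : 1 ≤ n) (c : Fin n → Rw a b)
    (hc : ∑ i, c i ^ 2 = 0) :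
    2 * ∑ i, c i = 0 :=
  all_two_orthogonal_to_self_orthogonal_general a b ha hb n c hc
end

section
/- (Gilbert–Varshamov-like Bound) Let n ≥ 1 and let d be an integer with 1 ≤ d ≤ 2n. If C ⊆ Σⁿ is a code with minimum Gau distance at least d that is maximal with respect to inclusion among all codes in Σⁿ with minimum Gau distance at least d, then 16ⁿ ≤ |C| · Σ_{r=0}^{d−1} Σ_{i=max(0, r−n)}^{⌊r/2⌋} n!/(i!·(r−2i)!·(n−r+i)!) · 9^i · 6^{r−2i}. -/
/-!
Writing `X ^ d_G(x, y)` as a product over coordinates shows that the spheres around any word are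
counted by `∑_y X ^ d_G(x, y) = ((1 + 3X) ^ 2) ^ n = (1 + 6X + 9X²) ^ n`, and two applications of
the binomial theorem turn the coefficient of `X ^ r` into the trinomial sum of the statement.
A maximal code is covering: a word outside it could be added without violating the minimum
distance otherwise, so the balls of radius `d - 1` around codewords exhaust all `16 ^ n` words.
-/

/-- The DNA pair alphabet Σ = Fin 4 × Fin 4 (A,G,C,T encoded as 0,1,2,3). -/
abbrev Sig := Fin 4 × Fin 4

/-- The Gau distance on Σⁿ:
d_G(x,y) = Σⱼ (δ(xⱼ.1, yⱼ.1) + δ(xⱼ.2, yⱼ.2)), where δ(u,v) = 0 if u = v, else 1. -/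
def dG (n : ℕ) (x y : Fin n → Sig) : ℕ :=
  ∑ j, ((if (x j).1 = (y j).1 then 0 else 1) + (if (x j).2 = (y j).2 then 0 else 1))

open Finset Polynomial

section Generating

variable {R : Type*} [CommSemiring R]

lemma sum_pow_ite_eq_one_add {α : Type*} [Fintype α] [DecidableEq α] (c : α) (r : R) :
    ∑ a, r ^ (if c = a then 0 else 1) = 1 + (Fintype.card α - 1 : ℕ) * r := by
  simp [sum_ite, filter_eq, ← ne_eq, filter_ne, card_erase_of_mem]

lemma sum_pow_sum_eq_prod_sum {ι α : Type*} [Fintype ι] [DecidableEq ι] [Fintype α]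
    (f : ι → α → ℕ) (r : R) :
    ∑ y : ι → α, r ^ ∑ j, f j (y j) = ∏ j, ∑ a, r ^ f j a := by
  simp_rw [← prod_pow_eq_pow_sum]
  exact (Fintype.prod_sum fun j a => r ^ f j a).symm

lemma coeff_sum_X_pow {α : Type*} [Fintype α] (f : α → ℕ) (r : ℕ) :
    (∑ a, (X : ℕ[X]) ^ f a).coeff r = #{a | f a = r} := by
  simp [finsetSum_coeff, coeff_X_pow, eq_comm]

lemma coeff_one_add_C_mul_X_pow (a : R) (m k : ℕ) :
    ((1 + C a * X) ^ m).coeff k = m.choose k * a ^ k := by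
  simp_rw [add_comm (1 : R[X]), add_pow, finsetSum_coeff, one_pow, mul_one, mul_pow, ← C_pow,
    coeff_mul_natCast, coeff_C_mul_X_pow, ite_mul, zero_mul, sum_ite_eq, mem_range]
  split_ifs with h
  · ring
  · simp [Nat.choose_eq_zero_of_lt (not_lt.1 h)]

lemma coeff_trinomial_pow (a b : R) (n r : ℕ) :
    ((1 + C a * X + C b * X ^ 2) ^ n).coeff r =
      ∑ i ∈ range (n + 1), if 2 * i ≤ r then
        n.choose i * (n - i).choose (r - 2 * i) * b ^ i * a ^ (r - 2 * i) else 0 := by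
  rw [add_comm, add_pow, finsetSum_coeff]
  refine sum_congr rfl fun i _ => ?_
  rw [coeff_mul_natCast, mul_pow, ← C_pow, ← pow_mul, mul_assoc, coeff_C_mul, coeff_X_pow_mul']
  split_ifs
  · rw [coeff_one_add_C_mul_X_pow]; ring
  · simp

end Generating

lemma choose_mul_choose_eq_factorial_div {n i a : ℕ} (h : i + a ≤ n) :
    n.choose i * (n - i).choose a =
      n.factorial / (i.factorial * a.factorial * (n - i - a).factorial) := by
  have hi := Nat.choose_mul_factorial_mul_factorial (n := n) (k := i) (by omega)
  have ha := Nat.choose_mul_factorial_mul_factorial (n := n - i) (k := a) (by omega)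
  refine (Nat.div_eq_of_eq_mul_left (by positivity) ?_).symm
  rw [← hi, ← ha]
  ring

lemma sum_range_ite_choose_le (n r a b : ℕ) :
    ∑ i ∈ range (n + 1), (if 2 * i ≤ r then
        n.choose i * (n - i).choose (r - 2 * i) * b ^ i * a ^ (r - 2 * i) else 0) ≤
      ∑ i ∈ Icc (r - n) (r / 2),
        n.factorial / (i.factorial * (r - 2 * i).factorial * (n + i - r).factorial) *
          b ^ i * a ^ (r - 2 * i) := by
  refine (sum_le_sum_of_ne_zero fun i hi hne => ?_).trans_eq (sum_congr rfl fun i hi => ?_)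
  · split_ifs at hne with h2i
    · have hchoose : (n - i).choose (r - 2 * i) ≠ 0 := fun h => hne (by simp [h])
      have := Nat.choose_eq_zero_iff.not.1 hchoose
      simp only [mem_range] at hi
      simp only [mem_Icc]
      omega
    · exact absurd rfl hne
  · rw [mem_Icc] at hi
    rw [if_pos (by omega), choose_mul_choose_eq_factorial_div (by omega),
      show n - i - (r - 2 * i) = n + i - r by omega]

section MaximalCode

variable {α : Type*}

def IsCodeWithMinDist (δ : α → α → ℕ) (d : ℕ) (C : Finset α) : Prop :=
  ∀ x ∈ C, ∀ y ∈ C, x ≠ y → d ≤ δ x y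

lemma exists_mem_dist_le_of_maximal [DecidableEq α] {δ : α → α → ℕ}
    (hcomm : ∀ x y, δ x y = δ y x) (hself : ∀ x, δ x x = 0) {d : ℕ} {C : Finset α}
    (hC : IsCodeWithMinDist δ d C)
    (hmax : ∀ C', IsCodeWithMinDist δ d C' → C ⊆ C' → C = C') (z : α) :
    ∃ c ∈ C, δ c z ≤ d - 1 := by
  by_cases hz : z ∈ C
  · exact ⟨z, hz, by simp [hself]⟩
  have hbad : ¬ IsCodeWithMinDist δ d (insert z C) := fun h =>
    hz (hmax _ h (subset_insert z C) ▸ mem_insert_self z C)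
  simp only [IsCodeWithMinDist, mem_insert, not_forall, not_le] at hbad
  obtain ⟨x, hx, y, hy, hxy, hlt⟩ := hbad
  rcases hx with rfl | hx <;> rcases hy with rfl | hy
  · exact absurd rfl hxy
  · exact ⟨y, hy, by rw [hcomm]; omega⟩
  · exact ⟨x, hx, by omega⟩
  · exact absurd (hC x hx y hy hxy) (not_le.2 hlt)

lemma card_le_card_mul_of_maximal [Fintype α] [DecidableEq α] {δ : α → α → ℕ}
    (hcomm : ∀ x y, δ x y = δ y x) (hself : ∀ x, δ x x = 0) {d : ℕ} {C : Finset α}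
    (hC : IsCodeWithMinDist δ d C)
    (hmax : ∀ C', IsCodeWithMinDist δ d C' → C ⊆ C' → C = C') {V : ℕ}
    (hball : ∀ c, #{z | δ c z ≤ d - 1} ≤ V) :
    Fintype.card α ≤ #C * V := by
  have hcover : (univ : Finset α) ⊆ C.biUnion fun c => {z | δ c z ≤ d - 1} := fun z _ => by
    obtain ⟨c, hc, hcz⟩ := exists_mem_dist_le_of_maximal hcomm hself hC hmax z
    exact mem_biUnion.2 ⟨c, hc, by simpa using hcz⟩
  exact (card_le_card hcover).trans (card_biUnion_le_card_mul _ _ _ fun c _ => hball c)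

end MaximalCode

section Gau

def letterDist (s t : Sig) : ℕ :=
  (if s.1 = t.1 then 0 else 1) + (if s.2 = t.2 then 0 else 1)

lemma dG_comm (n : ℕ) (x y : Fin n → Sig) : dG n x y = dG n y x := by
  simp [dG, eq_comm]

lemma dG_self (n : ℕ) (x : Fin n → Sig) : dG n x x = 0 := by
  simp [dG]

lemma sum_X_pow_letterDist (s : Sig) :
    ∑ t, (X : ℕ[X]) ^ letterDist s t = (1 + 3 * X) ^ 2 := by
  calc _ = (∑ a, (X : ℕ[X]) ^ (if s.1 = a then 0 else 1)) *
        ∑ b, X ^ (if s.2 = b then 0 else 1) := by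
        rw [sum_mul_sum, ← univ_product_univ, sum_product]
        simp only [letterDist, pow_add]
    _ = (1 + 3 * X) ^ 2 := by
        rw [sum_pow_ite_eq_one_add, sum_pow_ite_eq_one_add]
        norm_num
        ring

lemma sum_X_pow_dG (n : ℕ) (x : Fin n → Sig) :
    ∑ y, (X : ℕ[X]) ^ dG n x y = (1 + C 6 * X + C 9 * X ^ 2) ^ n := by
  calc ∑ y, (X : ℕ[X]) ^ dG n x y = ∏ j, ∑ t, (X : ℕ[X]) ^ letterDist (x j) t :=
        sum_pow_sum_eq_prod_sum (fun j => letterDist (x j)) X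
    _ = _ := by
        simp only [sum_X_pow_letterDist, prod_const, card_univ, Fintype.card_fin]
        congr 1
        simp [map_ofNat]
        ring

lemma card_dG_eq (n r : ℕ) (x : Fin n → Sig) :
    #{y | dG n x y = r} = ∑ i ∈ range (n + 1), if 2 * i ≤ r then
        n.choose i * (n - i).choose (r - 2 * i) * 9 ^ i * 6 ^ (r - 2 * i) else 0 := by
  rw [← coeff_sum_X_pow, sum_X_pow_dG, coeff_trinomial_pow]
  simp only [Nat.cast_id]

lemma card_dG_le (n m : ℕ) (x : Fin n → Sig) :
    #{y | dG n x y ≤ m} ≤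
      ∑ r ∈ Icc 0 m, ∑ i ∈ Icc (r - n) (r / 2),
        n.factorial / (i.factorial * (r - 2 * i).factorial * (n + i - r).factorial) *
          9 ^ i * 6 ^ (r - 2 * i) := by
  rw [card_eq_sum_card_fiberwise (f := dG n x) (t := Icc 0 m) fun y hy => by simp_all]
  refine sum_le_sum fun r _ => ?_
  calc #{y ∈ {y | dG n x y ≤ m} | dG n x y = r} ≤ #{y | dG n x y = r} :=
        card_le_card (filter_subset_filter _ (filter_subset _ _))
    _ ≤ _ := (card_dG_eq n r x).trans_le (sum_range_ite_choose_le n r 6 9)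

end Gau

theorem gau_gilbert_varshamov_bound_general (n d : ℕ)
    (C : Finset (Fin n → Sig))
    (hC : ∀ x ∈ C, ∀ y ∈ C, x ≠ y → d ≤ dG n x y)
    (hmax : ∀ C' : Finset (Fin n → Sig),
      (∀ x ∈ C', ∀ y ∈ C', x ≠ y → d ≤ dG n x y) → C ⊆ C' → C = C') :
    16 ^ n ≤
      C.card *
        ∑ r ∈ Finset.Icc 0 (d - 1), ∑ i ∈ Finset.Icc (r - n) (r / 2),
          n.factorial / (i.factorial * (r - 2 * i).factorial * (n + i - r).factorial) *
            9 ^ i * 6 ^ (r - 2 * i) := by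
  simpa using card_le_card_mul_of_maximal (dG_comm n) (dG_self n) hC hmax (card_dG_le n (d - 1))

/-- Gilbert–Varshamov-like bound: if C ⊆ Σⁿ has minimum Gau distance ≥ d
and is maximal (w.r.t. inclusion) among such codes, then
16ⁿ ≤ |C| · Σ_{r=0}^{d−1} Σ_{i=max(0,r−n)}^{⌊r/2⌋} n!/(i!·(r−2i)!·(n−r+i)!)·9^i·6^{r−2i}. -/
theorem gau_gilbert_varshamov_bound (n d : ℕ) (hn : 1 ≤ n) (hd1 : 1 ≤ d) (hd2 : d ≤ 2 * n)
    (C : Finset (Fin n → Sig))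
    (hC : ∀ x ∈ C, ∀ y ∈ C, x ≠ y → d ≤ dG n x y)
    (hmax : ∀ C' : Finset (Fin n → Sig),
      (∀ x ∈ C', ∀ y ∈ C', x ≠ y → d ≤ dG n x y) → C ⊆ C' → C = C') :
    16 ^ n ≤
      C.card *
        ∑ r ∈ Finset.Icc 0 (d - 1), ∑ i ∈ Finset.Icc (r - n) (r / 2),
          n.factorial / (i.factorial * (r - 2 * i).factorial * (n + i - r).factorial) *
            9 ^ i * 6 ^ (r - 2 * i) :=
  gau_gilbert_varshamov_bound_general n d C hC hmax
end
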